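/- (Coproduct for the right reflection algebra.) Let d, m, m̃ be positive integers and η ∈ ℂ. Let R : ℂ → End(ℂ^d ⊗ ℂ^d) satisfy the Yang–Baxter equation R₁₂(λ−μ)R₁₃(λ−ν)R₂₃(μ−ν) = R₂₃(μ−ν)R₁₃(λ−ν)R₁₂(λ−μ) for all λ, μ, ν, together with P R(λ) P = R(λ), R(λ)^{t₁t₂} = R(λ), R(λ)R(−λ) = ρ(λ)·Id and R^{t₁}(λ)R^{t₁}(−λ−2η) = ρ̃(λ)·Id with ρ(λ), ρ̃(λ) ≠ 0 for all λ. Let T(λ) be a d×d matrix-valued function with entries in End(ℂ^m) satisfying the Yang–Baxter algebra relation R₁₂(λ−μ)T₁(λ)T₂(μ) = T₂(μ)T₁(λ)R₁₂(λ−μ) for all λ, μ, such that T(λ) and T^a(λ) := (T(λ)⁻¹)^t (transpose in the d×d indices) are invertible for all λ, and such that T possesses the crossing symmetry (T^a)^a(λ) = δ(λ)·T(λ−2η) for some nowhere-vanishing scalar function δ. Let 𝒯̃⁺(λ) be a d×d matrix-valued function with entries in End(ℂ^{m̃}) satisfying the right reflection equation. Then the d×d matrix-valued function 𝒯⁺(λ)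 with entries in End(ℂ^{m̃} ⊗ ℂ^m) defined by 𝒯⁺(λ)^t = T(λ)^t·𝒯̃⁺(λ)^t·T^a(−λ) (transposes in the d×d indices; entries of 𝒯̃⁺ acting in the first factor and those of T in the second) satisfies the right reflection equation. -/
import Mathlib


/- STATEMENT 6: Coproduct for the right reflection algebra. -/

noncomputable section

open Complex Matrix Kronecker

/-- The permutation operator P on ℂ^d ⊗ ℂ^d. -/
def Pd (d : ℕ) : Matrix (Fin d × Fin d) (Fin d × Fin d) ℂ :=
  Matrix.of fun p q => if p.1 = q.2 ∧ p.2 = q.1 then 1 else 0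

/-- Partial transposition in the first tensor factor of ℂ^d ⊗ ℂ^d. -/
def pt1 {d : ℕ} (M : Matrix (Fin d × Fin d) (Fin d × Fin d) ℂ) :
    Matrix (Fin d × Fin d) (Fin d × Fin d) ℂ :=
  Matrix.of fun p q => M (q.1, p.2) (p.1, q.2)

/-- Partial transposition in the second tensor factor of ℂ^d ⊗ ℂ^d. -/
def pt2 {d : ℕ} (M : Matrix (Fin d × Fin d) (Fin d × Fin d) ℂ) :
    Matrix (Fin d × Fin d) (Fin d × Fin d) ℂ :=
  Matrix.of fun p q => M (p.1, q.2) (q.1, p.2)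

/-- Embedding of an operator on ℂ^d ⊗ ℂ^d into the factors 1,2 of ℂ^d ⊗ ℂ^d ⊗ ℂ^d. -/
def r12 {d : ℕ} (M : Matrix (Fin d × Fin d) (Fin d × Fin d) ℂ) :
    Matrix (Fin d × Fin d × Fin d) (Fin d × Fin d × Fin d) ℂ :=
  Matrix.of fun p q => M (p.1, p.2.1) (q.1, q.2.1) * (if p.2.2 = q.2.2 then 1 else 0)

/-- Embedding into the factors 1,3. -/
def r13 {d : ℕ} (M : Matrix (Fin d × Fin d) (Fin d × Fin d) ℂ) :
    Matrix (Fin d × Fin d × Fin d) (Fin d × Fin d × Fin d) ℂ :=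
  Matrix.of fun p q => M (p.1, p.2.2) (q.1, q.2.2) * (if p.2.1 = q.2.1 then 1 else 0)

/-- Embedding into the factors 2,3. -/
def r23 {d : ℕ} (M : Matrix (Fin d × Fin d) (Fin d × Fin d) ℂ) :
    Matrix (Fin d × Fin d × Fin d) (Fin d × Fin d × Fin d) ℂ :=
  Matrix.of fun p q => M (p.2.1, p.2.2) (q.2.1, q.2.2) * (if p.1 = q.1 then 1 else 0)

/-- A complex matrix on ℂ^d ⊗ ℂ^d viewed as a matrix with entries in the operator
algebra `A` of the quantum space. -/
def liftR {d : ℕ} {A : Type} [Semiring A] [Algebra ℂ A]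
    (R : Matrix (Fin d × Fin d) (Fin d × Fin d) ℂ) :
    Matrix (Fin d × Fin d) (Fin d × Fin d) A :=
  R.map (algebraMap ℂ A)

/-- d×d matrix of operators with its d×d indices placed in the first ℂ^d factor. -/
def emb1 {d : ℕ} {A : Type} [Zero A] (M : Matrix (Fin d) (Fin d) A) :
    Matrix (Fin d × Fin d) (Fin d × Fin d) A :=
  Matrix.of fun p q => if p.2 = q.2 then M p.1 q.1 else 0

/-- d×d indices placed in the second ℂ^d factor. -/
def emb2 {d : ℕ} {A : Type} [Zero A] (M : Matrix (Fin d) (Fin d) A) :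
    Matrix (Fin d × Fin d) (Fin d × Fin d) A :=
  Matrix.of fun p q => if p.1 = q.1 then M p.2 q.2 else 0

/-- The Yang–Baxter algebra relation `R₁₂(λ−μ)T₁(λ)T₂(μ) = T₂(μ)T₁(λ)R₁₂(λ−μ)`. -/
def YBA {d : ℕ} (R : ℂ → Matrix (Fin d × Fin d) (Fin d × Fin d) ℂ)
    {A : Type} [Semiring A] [Algebra ℂ A] (T : ℂ → Matrix (Fin d) (Fin d) A) : Prop :=
  ∀ lam mu : ℂ,
    liftR (R (lam - mu)) * emb1 (T lam) * emb2 (T mu) =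
      emb2 (T mu) * emb1 (T lam) * liftR (R (lam - mu))

/-- The left reflection equation. -/
def LeftRefl {d : ℕ} (R : ℂ → Matrix (Fin d × Fin d) (Fin d × Fin d) ℂ)
    {A : Type} [Semiring A] [Algebra ℂ A] (𝒯 : ℂ → Matrix (Fin d) (Fin d) A) : Prop :=
  ∀ lam mu : ℂ,
    liftR (R (lam - mu)) * emb1 (𝒯 lam) * liftR (R (lam + mu)) * emb2 (𝒯 mu) =
      emb2 (𝒯 mu) * liftR (R (lam + mu)) * emb1 (𝒯 lam) * liftR (R (lam - mu))

/-- Lift a d×d matrix of operators on ℂ^{m̃} to operators on ℂ^{m̃} ⊗ ℂ^m (first factor). -/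
def lift1 {d mt m : ℕ} (M : Matrix (Fin d) (Fin d) (Matrix (Fin mt) (Fin mt) ℂ)) :
    Matrix (Fin d) (Fin d) (Matrix (Fin mt × Fin m) (Fin mt × Fin m) ℂ) :=
  M.map fun X => X ⊗ₖ (1 : Matrix (Fin m) (Fin m) ℂ)

/-- Lift a d×d matrix of operators on ℂ^m to operators on ℂ^{m̃} ⊗ ℂ^m (second factor). -/
def lift2 {d mt m : ℕ} (M : Matrix (Fin d) (Fin d) (Matrix (Fin m) (Fin m) ℂ)) :
    Matrix (Fin d) (Fin d) (Matrix (Fin mt × Fin m) (Fin mt × Fin m) ℂ) :=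
  M.map fun X => (1 : Matrix (Fin mt) (Fin mt) ℂ) ⊗ₖ X

/-- The right reflection equation. -/
def RightRefl {d : ℕ} (η : ℂ) (R : ℂ → Matrix (Fin d × Fin d) (Fin d × Fin d) ℂ)
    {A : Type} [Semiring A] [Algebra ℂ A] (𝒯 : ℂ → Matrix (Fin d) (Fin d) A) : Prop :=
  ∀ lam mu : ℂ,
    liftR (R (-lam + mu)) * emb1 ((𝒯 lam)ᵀ) * liftR (R (-lam - mu - 2 * η)) *
        emb2 ((𝒯 mu)ᵀ) =
      emb2 ((𝒯 mu)ᵀ) * liftR (R (-lam - mu - 2 * η)) * emb1 ((𝒯 lam)ᵀ) *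
        liftR (R (-lam + mu))

namespace RRC
set_option linter.unusedSectionVars false

variable {d : ℕ} {A : Type} [Semiring A] [Algebra ℂ A]

local notation "ℳ" => Matrix (Fin d × Fin d) (Fin d × Fin d) A

lemma emb1_mul (X Y : Matrix (Fin d) (Fin d) A) :
    emb1 (X * Y) = emb1 X * emb1 Y := by
  ext p q
  simp [emb1, Matrix.mul_apply, Fintype.sum_prod_type, ite_and, apply_ite]
  by_cases h : p.2 = q.2 <;> simp [h]

lemma emb2_mul (X Y : Matrix (Fin d) (Fin d) A) :
    emb2 (X * Y) = emb2 X * emb2 Y := by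
  ext p q
  simp [emb2, Matrix.mul_apply, Fintype.sum_prod_type, ite_and, apply_ite]
  by_cases h : p.1 = q.1 <;> simp [h]

lemma emb1_one : emb1 (1 : Matrix (Fin d) (Fin d) A) = 1 := by
  ext p q
  simp [emb1, Matrix.one_apply, Prod.ext_iff, ite_and]
  by_cases h1 : p.1 = q.1 <;> by_cases h2 : p.2 = q.2 <;> simp [h1, h2]

lemma emb2_one : emb2 (1 : Matrix (Fin d) (Fin d) A) = 1 := by
  ext p q
  simp [emb2, Matrix.one_apply, Prod.ext_iff, ite_and]

lemma liftR_mul (C D : Matrix (Fin d × Fin d) (Fin d × Fin d) ℂ) :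
    liftR (C * D) = (liftR C : ℳ) * liftR D := by
  simpa [liftR] using Matrix.map_mul (M := C) (N := D) (f := algebraMap ℂ A)

lemma liftR_one : (liftR (1 : Matrix (Fin d × Fin d) (Fin d × Fin d) ℂ) : ℳ) = 1 := by
  simp [liftR, Matrix.map_one]

lemma liftR_smul (c : ℂ) (C : Matrix (Fin d × Fin d) (Fin d × Fin d) ℂ) :
    (liftR (c • C) : ℳ) = c • liftR C := by
  ext p q
  simp only [liftR, Matrix.map_apply, Matrix.smul_apply, smul_eq_mul, _root_.map_mul]
  rw [Algebra.smul_def]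

-- entry lemmas
lemma mul_emb1_apply (M : ℳ) (X : Matrix (Fin d) (Fin d) A) (p q : Fin d × Fin d) :
    (M * emb1 X) p q = ∑ u, M p (u, q.2) * X u q.1 := by
  rw [Matrix.mul_apply, Fintype.sum_prod_type]
  simp [emb1, mul_ite]

lemma mul_emb2_apply (M : ℳ) (Y : Matrix (Fin d) (Fin d) A) (p q : Fin d × Fin d) :
    (M * emb2 Y) p q = ∑ v, M p (q.1, v) * Y v q.2 := by
  rw [Matrix.mul_apply, Fintype.sum_prod_type]
  simp [emb2, mul_ite]

lemma emb1_mul_apply (X : Matrix (Fin d) (Fin d) A) (M : ℳ) (p q : Fin d × Fin d) :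
    (emb1 X * M) p q = ∑ u, X p.1 u * M (u, p.2) q := by
  rw [Matrix.mul_apply, Fintype.sum_prod_type]
  simp [emb1, ite_mul]

lemma emb2_mul_apply (Y : Matrix (Fin d) (Fin d) A) (M : ℳ) (p q : Fin d × Fin d) :
    (emb2 Y * M) p q = ∑ v, Y p.2 v * M (p.1, v) q := by
  rw [Matrix.mul_apply, Fintype.sum_prod_type]
  simp [emb2, ite_mul]

lemma liftR_mul_apply (C : Matrix (Fin d × Fin d) (Fin d × Fin d) ℂ) (M : ℳ) (p q : Fin d × Fin d) :
    ((liftR C : ℳ) * M) p q = ∑ a, algebraMap ℂ A (C p a) * M a q := by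
  rw [Matrix.mul_apply]; simp [liftR]

lemma mul_liftR_apply (M : ℳ) (C : Matrix (Fin d × Fin d) (Fin d × Fin d) ℂ) (p q : Fin d × Fin d) :
    (M * (liftR C : ℳ)) p q = ∑ a, M p a * algebraMap ℂ A (C a q) := by
  rw [Matrix.mul_apply]; simp [liftR]

lemma emb1_emb2_apply (X Y : Matrix (Fin d) (Fin d) A) (p q : Fin d × Fin d) :
    (emb1 X * emb2 Y) p q = X p.1 q.1 * Y p.2 q.2 := by
  rw [emb1_mul_apply]
  simp [emb2, mul_ite]

lemma emb2_emb1_apply (X Y : Matrix (Fin d) (Fin d) A) (p q : Fin d × Fin d) :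
    (emb2 Y * emb1 X) p q = Y p.2 q.2 * X p.1 q.1 := by
  rw [emb2_mul_apply]
  simp [emb1, mul_ite]


/-- partial transpose in factor 1, for operator-valued matrices -/
def t1m (M : ℳ) : ℳ := Matrix.of fun p q => M (q.1, p.2) (p.1, q.2)
/-- partial transpose in factor 2, for operator-valued matrices -/
def t2m (M : ℳ) : ℳ := Matrix.of fun p q => M (p.1, q.2) (q.1, p.2)

lemma comm_aux (c : ℂ) (x y : A) :
    x * algebraMap ℂ A c * y = algebraMap ℂ A c * (x * y) := by
  rw [← Algebra.commutes, mul_assoc]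

lemma F3 (X Y : Matrix (Fin d) (Fin d) A) (C : Matrix (Fin d × Fin d) (Fin d × Fin d) ℂ) :
    t1m (emb1 X * liftR C * emb2 Y) = liftR (pt1 C) * emb1 Xᵀ * emb2 Y := by
  ext p q
  simp only [t1m, Matrix.of_apply]
  rw [mul_emb2_apply, mul_assoc, liftR_mul_apply]
  simp only [emb1_emb2_apply]
  simp only [emb1_mul_apply, liftR, Matrix.map_apply, Matrix.of_apply,
    Finset.sum_mul, pt1, Matrix.transpose_apply]
  rw [Finset.sum_comm, Fintype.sum_prod_type]
  exact Finset.sum_congr rfl fun u _ => Finset.sum_congr rfl fun v _ => comm_aux _ _ _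


lemma comm_aux3 (c : ℂ) (x y : A) :
    y * algebraMap ℂ A c * x = y * x * algebraMap ℂ A c := by
  rw [mul_assoc, Algebra.commutes c x, ← mul_assoc]

lemma comm_aux4 (c : ℂ) (x y : A) :
    algebraMap ℂ A c * x * y = x * y * algebraMap ℂ A c := by
  rw [Algebra.commutes c x, mul_assoc, Algebra.commutes c y, ← mul_assoc]

lemma F4 (X Y : Matrix (Fin d) (Fin d) A) (C : Matrix (Fin d × Fin d) (Fin d × Fin d) ℂ) :
    t1m (emb2 Y * liftR C * emb1 X) = emb2 Y * emb1 Xᵀ * liftR (pt1 C) := by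
  ext p q
  simp only [t1m, Matrix.of_apply]
  rw [mul_emb1_apply, mul_liftR_apply]
  simp only [emb2_emb1_apply]
  simp only [emb2_mul_apply, liftR, Matrix.map_apply, Matrix.of_apply,
    Finset.sum_mul, pt1, Matrix.transpose_apply]
  rw [Fintype.sum_prod_type]
  exact Finset.sum_congr rfl fun u _ => Finset.sum_congr rfl fun v _ => comm_aux3 _ _ _

lemma F6 (X Y : Matrix (Fin d) (Fin d) A) (C : Matrix (Fin d × Fin d) (Fin d × Fin d) ℂ) :
    t2m (emb1 X * emb2 Y * liftR C) = emb1 X * liftR (pt2 C) * emb2 Yᵀ := by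
  ext p q
  simp only [t2m, Matrix.of_apply]
  rw [mul_liftR_apply, mul_emb2_apply]
  simp only [emb1_emb2_apply]
  simp only [emb1_mul_apply, liftR, Matrix.map_apply, Matrix.of_apply,
    Finset.sum_mul, pt2, Matrix.transpose_apply]
  rw [Fintype.sum_prod_type, Finset.sum_comm]
  exact Finset.sum_congr rfl fun v _ => Finset.sum_congr rfl fun u _ =>
    (comm_aux3 _ _ _).symm

lemma F7 (X Y : Matrix (Fin d) (Fin d) A) (C : Matrix (Fin d × Fin d) (Fin d × Fin d) ℂ) :
    t2m (liftR C * emb2 Y * emb1 X) = emb2 Yᵀ * liftR (pt2 C) * emb1 X := by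
  ext p q
  simp only [t2m, Matrix.of_apply]
  rw [mul_emb1_apply, mul_emb1_apply]
  refine Finset.sum_congr rfl fun u _ => ?_
  rw [mul_emb2_apply, emb2_mul_apply]
  simp only [liftR, Matrix.map_apply, Matrix.of_apply, pt2, Matrix.transpose_apply]
  exact congrArg (· * X u q.1) (Finset.sum_congr rfl fun v _ => Algebra.commutes _ _)

lemma G1 (X Y : Matrix (Fin d) (Fin d) A) (C : Matrix (Fin d × Fin d) (Fin d × Fin d) ℂ) :
    (liftR C * emb1 X * emb2 Y)ᵀ = emb1 Xᵀ * emb2 Yᵀ * liftR Cᵀ := by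
  ext p q
  rw [Matrix.transpose_apply, mul_emb2_apply, mul_liftR_apply]
  simp only [emb1_emb2_apply]
  simp only [mul_emb1_apply, liftR, Matrix.map_apply, Matrix.of_apply,
    Finset.sum_mul, Matrix.transpose_apply]
  rw [Fintype.sum_prod_type, Finset.sum_comm]
  exact Finset.sum_congr rfl fun v _ => Finset.sum_congr rfl fun u _ => comm_aux4 _ _ _

lemma G2 (X Y : Matrix (Fin d) (Fin d) A) (C : Matrix (Fin d × Fin d) (Fin d × Fin d) ℂ) :
    (emb2 Y * emb1 X * liftR C)ᵀ = liftR Cᵀ * emb2 Yᵀ * emb1 Xᵀ := by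
  ext p q
  rw [Matrix.transpose_apply, mul_liftR_apply, mul_emb1_apply]
  simp only [emb2_emb1_apply]
  simp only [mul_emb2_apply, liftR, Matrix.map_apply, Matrix.of_apply,
    Finset.sum_mul, Matrix.transpose_apply]
  rw [Fintype.sum_prod_type]
  exact Finset.sum_congr rfl fun u _ => Finset.sum_congr rfl fun v _ =>
    (comm_aux4 _ _ _).symm

lemma Pd_mul_Pd : Pd d * Pd d = 1 := by
  ext p q
  simp [Pd, Matrix.mul_apply, Fintype.sum_prod_type, Matrix.one_apply, Prod.ext_iff,
    ite_and, eq_comm]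

/-- conjugation by the (lifted) permutation operator -/
def pconj (M : Matrix (Fin d × Fin d) (Fin d × Fin d) A) :
    Matrix (Fin d × Fin d) (Fin d × Fin d) A :=
  liftR (Pd d) * M * liftR (Pd d)

lemma Pl_Pl : (liftR (Pd d) : ℳ) * liftR (Pd d) = 1 := by
  rw [← liftR_mul, Pd_mul_Pd, liftR_one]

lemma pconj_mul (U V : ℳ) : pconj (U * V) = pconj U * pconj V := by
  simp only [pconj, mul_assoc]
  rw [← mul_assoc (liftR (Pd d)) (liftR (Pd d)) (V * liftR (Pd d)), Pl_Pl, one_mul]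

lemma pconj_emb1 (X : Matrix (Fin d) (Fin d) A) : pconj (emb1 X) = emb2 X := by
  ext p q
  simp only [pconj]
  rw [mul_liftR_apply]
  simp only [liftR_mul_apply]
  simp [liftR, Pd, emb1, emb2, ite_and, apply_ite (algebraMap ℂ A), mul_ite, ite_mul,
    Fintype.sum_prod_type, eq_comm]

lemma pconj_emb2 (X : Matrix (Fin d) (Fin d) A) : pconj (emb2 X) = emb1 X := by
  ext p q
  simp only [pconj]
  rw [mul_liftR_apply]
  simp only [liftR_mul_apply]
  simp [liftR, Pd, emb1, emb2, ite_and, apply_ite (algebraMap ℂ A), mul_ite, ite_mul,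
    Fintype.sum_prod_type, eq_comm]

lemma pconj_liftR (C : Matrix (Fin d × Fin d) (Fin d × Fin d) ℂ) :
    pconj (liftR C : ℳ) = liftR (Pd d * C * Pd d) := by
  simp only [pconj, ← liftR_mul]

lemma conj_swap {S : Type} [Monoid S] (a ai x xi y yi : S)
    (ha : a * ai = 1) (hai : ai * a = 1) (hx : x * xi = 1) (hxi : xi * x = 1)
    (hy : y * yi = 1) (hyi : yi * y = 1) (h : a * x * y = y * x * a) :
    ai * xi * yi = yi * xi * ai := by
  have hu : (yi * xi * ai) * (a * x * y) = 1 := by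
    simp only [mul_assoc]
    rw [← mul_assoc ai a, hai, one_mul, ← mul_assoc xi x, hxi, one_mul, hyi]
  have hv : (y * x * a) * (ai * xi * yi) = 1 := by
    simp only [mul_assoc]
    rw [← mul_assoc a ai, ha, one_mul, ← mul_assoc x xi, hx, one_mul, hy]
  calc ai * xi * yi = 1 * (ai * xi * yi) := (one_mul _).symm
    _ = ((yi * xi * ai) * (a * x * y)) * (ai * xi * yi) := by rw [hu]
    _ = (yi * xi * ai) * ((y * x * a) * (ai * xi * yi)) := by
          rw [h]; simp only [mul_assoc]
    _ = (yi * xi * ai) * 1 := by rw [hv]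
    _ = yi * xi * ai := mul_one _

lemma smul_cancel {c : ℂ} (hc : c ≠ 0) {U V : ℳ} (h : c • U = c • V) : U = V := by
  have := congrArg (fun M => c⁻¹ • M) h
  simpa [smul_smul, inv_mul_cancel₀ hc] using this

lemma transpose_R_eq {R : Matrix (Fin d × Fin d) (Fin d × Fin d) ℂ}
    (hsymT : pt2 (pt1 R) = R) : Rᵀ = R := by
  conv_lhs => rw [← hsymT]
  ext p q; simp [pt1, pt2, Matrix.transpose_apply]

/-- E1-type relation: transposed, swapped YBA. -/
lemma key_swap (R : ℂ → Matrix (Fin d × Fin d) (Fin d × Fin d) ℂ)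
    (hsymP : ∀ x : ℂ, Pd d * R x * Pd d = R x)
    (hsymT : ∀ x : ℂ, pt2 (pt1 (R x)) = R x)
    (T : ℂ → Matrix (Fin d) (Fin d) A) (hT : YBA R T) (lam mu : ℂ) :
    liftR (R (-lam + mu)) * emb1 ((T lam)ᵀ) * emb2 ((T mu)ᵀ)
      = emb2 ((T mu)ᵀ) * emb1 ((T lam)ᵀ) * liftR (R (-lam + mu)) := by
  have h2 := congrArg Matrix.transpose (hT mu lam)
  rw [G1, G2, transpose_R_eq (hsymT (mu - lam))] at h2
  have h3 := congrArg pconj h2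
  simp only [pconj_mul, pconj_emb1, pconj_emb2, pconj_liftR] at h3
  rw [hsymP] at h3
  rw [neg_add_eq_sub]
  exact h3.symm

/-- the inverse monodromy matrix satisfies the YBA for `R(−·)`. -/
lemma YBA_inv (R : ℂ → Matrix (Fin d × Fin d) (Fin d × Fin d) ℂ) (ρ : ℂ → ℂ)
    (hρ : ∀ x : ℂ, ρ x ≠ 0) (huni : ∀ x : ℂ, R x * R (-x) = ρ x • 1)
    (T Tinv : ℂ → Matrix (Fin d) (Fin d) A)
    (hTinv : ∀ l : ℂ, T l * Tinv l = 1 ∧ Tinv l * T l = 1)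
    (hT : YBA R T) : YBA (fun x => R (-x)) Tinv := by
  intro lam mu
  set x := lam - mu with hx
  set Rinv : Matrix (Fin d × Fin d) (Fin d × Fin d) ℂ := (ρ x)⁻¹ • R (-x) with hRinv
  have ha : R x * Rinv = 1 := by
    rw [hRinv, mul_smul_comm, huni, smul_smul, inv_mul_cancel₀ (hρ x), one_smul]
  have hai : Rinv * R x = 1 := mul_eq_one_comm.mp ha
  have hla : (liftR (R x) : ℳ) * liftR Rinv = 1 := by
    rw [← liftR_mul, ha, liftR_one]
  have hlai : (liftR Rinv : ℳ) * liftR (R x) = 1 := by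
    rw [← liftR_mul, hai, liftR_one]
  have hx1 : emb1 (T lam) * emb1 (Tinv lam) = (1 : ℳ) := by
    rw [← emb1_mul, (hTinv lam).1, emb1_one]
  have hx2 : emb1 (Tinv lam) * emb1 (T lam) = (1 : ℳ) := by
    rw [← emb1_mul, (hTinv lam).2, emb1_one]
  have hy1 : emb2 (T mu) * emb2 (Tinv mu) = (1 : ℳ) := by
    rw [← emb2_mul, (hTinv mu).1, emb2_one]
  have hy2 : emb2 (Tinv mu) * emb2 (T mu) = (1 : ℳ) := by
    rw [← emb2_mul, (hTinv mu).2, emb2_one]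
  have key := conj_swap (liftR (R x)) (liftR Rinv) (emb1 (T lam)) (emb1 (Tinv lam))
    (emb2 (T mu)) (emb2 (Tinv mu)) hla hlai hx1 hx2 hy1 hy2 (hT lam mu)
  have hb : (liftR (R (-x)) : ℳ) = ρ x • liftR Rinv := by
    rw [hRinv, liftR_smul, smul_smul, mul_inv_cancel₀ (hρ x), one_smul]
  show (liftR (R (-x)) : ℳ) * emb1 (Tinv lam) * emb2 (Tinv mu)
      = emb2 (Tinv mu) * emb1 (Tinv lam) * liftR (R (-x))
  rw [hb]
  simp only [smul_mul_assoc, mul_smul_comm, key]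

lemma mid_swap {S : Type} [Monoid S] (c x y yi : S) (hy : y * yi = 1) (hyi : yi * y = 1)
    (h : c * x * y = y * x * c) : yi * c * x = x * c * yi := by
  have h2 := congrArg (fun M => yi * M * yi) h
  simp only [mul_assoc] at h2 ⊢
  rw [hy, mul_one, ← mul_assoc yi y, hyi, one_mul] at h2
  exact h2

lemma flip_sides {c0 c1 : Matrix (Fin d × Fin d) (Fin d × Fin d) ℂ} {rt : ℂ} (hrt : rt ≠ 0)
    (h01 : c0 * c1 = rt • 1) (h10 : c1 * c0 = rt • 1)
    {X Y : ℳ} (h : liftR c0 * X = Y * liftR c0) : X * liftR c1 = liftR c1 * Y := by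
  have l01 : (liftR c0 : ℳ) * liftR c1 = rt • 1 := by
    rw [← liftR_mul, h01, liftR_smul, liftR_one]
  have l10 : (liftR c1 : ℳ) * liftR c0 = rt • 1 := by
    rw [← liftR_mul, h10, liftR_smul, liftR_one]
  apply smul_cancel hrt
  calc rt • (X * liftR c1)
      = (rt • (1:ℳ)) * (X * liftR c1) := by rw [smul_mul_assoc, one_mul]
    _ = (liftR c1 * liftR c0) * (X * liftR c1) := by rw [l10]
    _ = liftR c1 * ((liftR c0 * X) * liftR c1) := by simp only [mul_assoc]
    _ = liftR c1 * ((Y * liftR c0) * liftR c1) := by rw [h]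
    _ = (liftR c1 * Y) * (liftR c0 * liftR c1) := by simp only [mul_assoc]
    _ = (liftR c1 * Y) * (rt • (1:ℳ)) := by rw [l01]
    _ = rt • (liftR c1 * Y) := by rw [mul_smul_comm, mul_one]

/-- E2-type relation: the crossed exchange relation between `Tinv` in space 1 and
`T` in space 2. -/
lemma key_cross (η : ℂ) (R : ℂ → Matrix (Fin d × Fin d) (Fin d × Fin d) ℂ)
    (hsymP : ∀ x : ℂ, Pd d * R x * Pd d = R x)
    (hsymT : ∀ x : ℂ, pt2 (pt1 (R x)) = R x)
    (ρt : ℂ → ℂ) (hρt : ∀ x : ℂ, ρt x ≠ 0)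
    (hcross : ∀ x : ℂ, pt1 (R x) * pt1 (R (-x - 2 * η)) = ρt x • 1)
    (T Tinv : ℂ → Matrix (Fin d) (Fin d) A)
    (hTinv : ∀ l : ℂ, T l * Tinv l = 1 ∧ Tinv l * T l = 1)
    (hT : YBA R T) (nu mu : ℂ) :
    emb1 ((Tinv nu)ᵀ) * liftR (R (nu - mu - 2 * η)) * emb2 ((T mu)ᵀ)
      = emb2 ((T mu)ᵀ) * liftR (R (nu - mu - 2 * η)) * emb1 ((Tinv nu)ᵀ) := by
  have e2i : emb2 (T nu) * emb2 (Tinv nu) = (1 : ℳ) := by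
    rw [← emb2_mul, (hTinv nu).1, emb2_one]
  have e2i' : emb2 (Tinv nu) * emb2 (T nu) = (1 : ℳ) := by
    rw [← emb2_mul, (hTinv nu).2, emb2_one]
  have h3 := mid_swap (liftR (R (mu - nu))) (emb1 (T mu)) (emb2 (T nu))
    (emb2 (Tinv nu)) e2i e2i' (hT mu nu)
  -- P-conjugate
  have h4 := congrArg pconj h3
  simp only [pconj_mul, pconj_emb1, pconj_emb2, pconj_liftR] at h4
  rw [hsymP] at h4
  -- h4 : emb1 (Tinv nu) * liftR (R (mu-nu)) * emb2 (T mu) = emb2 (T mu) * _ * emb1 (Tinv nu)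
  have h5 := congrArg t1m h4
  rw [F3, F4] at h5
  -- crossing unitarity
  have hc := hcross (mu - nu)
  rw [show -(mu - nu) - 2 * η = nu - mu - 2 * η by ring] at hc
  have hcomm : pt1 (R (mu - nu)) * ((ρt (mu - nu))⁻¹ • pt1 (R (nu - mu - 2 * η))) = 1 := by
    rw [mul_smul_comm, hc, smul_smul, inv_mul_cancel₀ (hρt _), one_smul]
  have h10 : pt1 (R (nu - mu - 2 * η)) * pt1 (R (mu - nu)) = ρt (mu - nu) • 1 := by
    have h2 := mul_eq_one_comm.mp hcomm
    have h3' := congrArg (fun M => ρt (mu - nu) • M) h2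
    simpa [smul_mul_assoc, smul_smul, mul_inv_cancel₀ (hρt _)] using h3'
  -- pass R through
  have h5' : liftR (pt1 (R (mu - nu))) * (emb1 ((Tinv nu)ᵀ) * emb2 (T mu))
      = (emb2 (T mu) * emb1 ((Tinv nu)ᵀ)) * liftR (pt1 (R (mu - nu))) := by
    rw [← mul_assoc]; exact h5
  have h6 := flip_sides (hρt (mu - nu)) hc h10 h5'
  -- h6 : (emb1 (Tinv nu)ᵀ * emb2 (T mu)) * liftR (pt1 (R (nu-mu-2η)))
  --        = liftR (pt1 (R (nu-mu-2η))) * (emb2 (T mu) * emb1 (Tinv nu)ᵀ)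
  rw [← mul_assoc] at h6
  have h7 := congrArg t2m h6
  rw [F6, F7, hsymT] at h7
  exact h7

lemma emb1_emb2_comm (X Y : Matrix (Fin d) (Fin d) A)
    (h : ∀ i j k l, X i j * Y k l = Y k l * X i j) :
    emb1 X * emb2 Y = emb2 Y * emb1 X := by
  ext p q
  rw [emb1_emb2_apply, emb2_emb1_apply, h]

section Transport

variable {A' : Type} [Semiring A'] [Algebra ℂ A'] (ψ : A →+* A')

lemma map_liftR (hψ : ∀ c : ℂ, ψ (algebraMap ℂ A c) = algebraMap ℂ A' c)
    (C : Matrix (Fin d × Fin d) (Fin d × Fin d) ℂ) :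
    (liftR C : ℳ).map ψ = liftR C := by
  ext p q; simp [liftR, hψ]

lemma map_emb1 (X : Matrix (Fin d) (Fin d) A) :
    (emb1 X).map ψ = emb1 (X.map ψ) := by
  ext p q; simp [emb1, apply_ite ψ]

lemma map_emb2 (X : Matrix (Fin d) (Fin d) A) :
    (emb2 X).map ψ = emb2 (X.map ψ) := by
  ext p q; simp [emb2, apply_ite ψ]

lemma YBA_map (hψ : ∀ c : ℂ, ψ (algebraMap ℂ A c) = algebraMap ℂ A' c)
    (R : ℂ → Matrix (Fin d × Fin d) (Fin d × Fin d) ℂ)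
    (T : ℂ → Matrix (Fin d) (Fin d) A) (hT : YBA R T) :
    YBA R (fun l => (T l).map ψ) := by
  intro lam mu
  have h := congrArg (fun M => Matrix.map M (ψ : A → A')) (hT lam mu)
  simp only [Matrix.map_mul, map_liftR _ hψ, map_emb1, map_emb2] at h
  exact h

lemma RightRefl_map (hψ : ∀ c : ℂ, ψ (algebraMap ℂ A c) = algebraMap ℂ A' c)
    (η : ℂ) (R : ℂ → Matrix (Fin d × Fin d) (Fin d × Fin d) ℂ)
    (S : ℂ → Matrix (Fin d) (Fin d) A) (hS : RightRefl η R S) :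
    RightRefl η R (fun l => (S l).map ψ) := by
  intro lam mu
  have h := congrArg (fun M => Matrix.map M (ψ : A → A')) (hS lam mu)
  simp only [Matrix.map_mul, map_liftR _ hψ, map_emb1, map_emb2,
    Matrix.transpose_map] at h
  simp only [Matrix.transpose_map]
  exact h

end Transport

section Reassoc

variable {S : Type} [Semigroup S]

lemma r2 {a b a' b' : S} (h : a * b = a' * b') (w : S) :
    a * (b * w) = a' * (b' * w) := by
  rw [← mul_assoc, h, mul_assoc]

lemma r3 {a b c a' b' c' : S} (h : a * b * c = a' * b' * c') (w : S) :
    a * (b * (c * w)) = a' * (b' * (c' * w)) := by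
  rw [← mul_assoc, ← mul_assoc, h, mul_assoc, mul_assoc]

lemma r3' {a b c a' b' c' : S} (h : a * b * c = a' * b' * c') :
    a * (b * c) = a' * (b' * c') := by
  rw [← mul_assoc, h, mul_assoc]

lemma r4 {a b c e a' b' c' e' : S} (h : a * b * c * e = a' * b' * c' * e') (w : S) :
    a * (b * (c * (e * w))) = a' * (b' * (c' * (e' * w))) := by
  rw [← mul_assoc, ← mul_assoc, ← mul_assoc, h, mul_assoc, mul_assoc, mul_assoc]

end Reassoc

end RRC

open RRC in
/-- (Sklyanin.) If `T(λ)` is an invertible representation of the Yang–Baxter algebra of a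
symmetric, unitary and crossing-unitary R-matrix, whose antipode `T^a(λ) = (T(λ)⁻¹)ᵗ` is
invertible and which possesses the crossing symmetry `(T^a)^a(λ) = δ(λ)·T(λ−2η)`, and if
`𝒯̃⁺(λ)` satisfies the right reflection equation, then `𝒯⁺(λ)` defined by
`𝒯⁺(λ)ᵗ = T(λ)ᵗ·𝒯̃⁺(λ)ᵗ·T^a(−λ)` satisfies the right reflection equation. -/
theorem right_reflection_coproduct (d m mt : ℕ) (hd : 0 < d) (hm : 0 < m) (hmt : 0 < mt)
    (η : ℂ) (R : ℂ → Matrix (Fin d × Fin d) (Fin d × Fin d) ℂ) (ρ ρt δ : ℂ → ℂ)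
    (hybe : ∀ lam mu nu : ℂ,
      r12 (R (lam - mu)) * r13 (R (lam - nu)) * r23 (R (mu - nu)) =
        r23 (R (mu - nu)) * r13 (R (lam - nu)) * r12 (R (lam - mu)))
    (hsymP : ∀ lam : ℂ, Pd d * R lam * Pd d = R lam)
    (hsymT : ∀ lam : ℂ, pt2 (pt1 (R lam)) = R lam)
    (hρ : ∀ lam : ℂ, ρ lam ≠ 0) (hρt : ∀ lam : ℂ, ρt lam ≠ 0)
    (huni : ∀ lam : ℂ, R lam * R (-lam) = ρ lam • 1)
    (hcross : ∀ lam : ℂ, pt1 (R lam) * pt1 (R (-lam - 2 * η)) = ρt lam • 1)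
    (T Tinv Tainv : ℂ → Matrix (Fin d) (Fin d) (Matrix (Fin m) (Fin m) ℂ))
    (hT : YBA R T)
    (hTinv : ∀ lam : ℂ, T lam * Tinv lam = 1 ∧ Tinv lam * T lam = 1)
    -- `T^a(λ) = (T(λ)⁻¹)ᵗ = (Tinv λ)ᵀ` is invertible with inverse `Tainv`
    (hTainv : ∀ lam : ℂ, (Tinv lam)ᵀ * Tainv lam = 1 ∧ Tainv lam * (Tinv lam)ᵀ = 1)
    -- crossing symmetry `(T^a)^a(λ) = ((T^a(λ))⁻¹)ᵗ = δ(λ)·T(λ−2η)`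
    (hδ : ∀ lam : ℂ, δ lam ≠ 0)
    (hcrossT : ∀ lam : ℂ, (Tainv lam)ᵀ = δ lam • T (lam - 2 * η))
    (𝒯t : ℂ → Matrix (Fin d) (Fin d) (Matrix (Fin mt) (Fin mt) ℂ))
    (h𝒯t : RightRefl η R 𝒯t) :
    RightRefl η R (fun lam =>
      (lift2 (mt := mt) ((T lam)ᵀ) * lift1 ((𝒯t lam)ᵀ) * lift2 ((Tinv (-lam))ᵀ))ᵀ) := by
  classical
  -- the two Kronecker-factor embeddings as ring homomorphisms
  let ψ1 : Matrix (Fin mt) (Fin mt) ℂ →+* Matrix (Fin mt × Fin m) (Fin mt × Fin m) ℂ :=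
    { toFun := fun X => X ⊗ₖ (1 : Matrix (Fin m) (Fin m) ℂ)
      map_one' := Matrix.one_kronecker_one
      map_mul' := fun X Y => by
        simpa using Matrix.mul_kronecker_mul X Y (1 : Matrix (Fin m) (Fin m) ℂ) 1
      map_zero' := Matrix.zero_kronecker _
      map_add' := fun X Y => Matrix.add_kronecker X Y _ }
  let ψ2 : Matrix (Fin m) (Fin m) ℂ →+* Matrix (Fin mt × Fin m) (Fin mt × Fin m) ℂ :=
    { toFun := fun X => (1 : Matrix (Fin mt) (Fin mt) ℂ) ⊗ₖ X
      map_one' := Matrix.one_kronecker_one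
      map_mul' := fun X Y => by
        simpa using Matrix.mul_kronecker_mul (1 : Matrix (Fin mt) (Fin mt) ℂ) 1 X Y
      map_zero' := Matrix.kronecker_zero _
      map_add' := fun X Y => Matrix.kronecker_add _ X Y }
  have hψ1 : ∀ c : ℂ, ψ1 (algebraMap ℂ _ c) = algebraMap ℂ _ c := by
    intro c
    show (algebraMap ℂ _ c) ⊗ₖ (1 : Matrix (Fin m) (Fin m) ℂ) = _
    rw [Algebra.algebraMap_eq_smul_one, Algebra.algebraMap_eq_smul_one,
      Matrix.smul_kronecker, Matrix.one_kronecker_one]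
  have hψ2 : ∀ c : ℂ, ψ2 (algebraMap ℂ _ c) = algebraMap ℂ _ c := by
    intro c
    show (1 : Matrix (Fin mt) (Fin mt) ℂ) ⊗ₖ (algebraMap ℂ _ c) = _
    rw [Algebra.algebraMap_eq_smul_one, Algebra.algebraMap_eq_smul_one,
      Matrix.kronecker_smul, Matrix.one_kronecker_one]
  -- bridging between `lift1/lift2` and `Matrix.map`
  have ht1 : ∀ M : Matrix (Fin d) (Fin d) (Matrix (Fin mt) (Fin mt) ℂ),
      (M.map (ψ1 : _ → _))ᵀ = lift1 (Mᵀ) := by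
    intro M; rw [← Matrix.transpose_map]; rfl
  have ht2 : ∀ M : Matrix (Fin d) (Fin d) (Matrix (Fin m) (Fin m) ℂ),
      (M.map (ψ2 : _ → _))ᵀ = lift2 (Mᵀ) := by
    intro M; rw [← Matrix.transpose_map]; rfl
  -- transported monodromy data
  have hT' : YBA R (fun l => (T l).map (ψ2 : _ → _)) := YBA_map ψ2 hψ2 R T hT
  have hTinv' : ∀ l : ℂ, (T l).map (ψ2 : _ → _) * (Tinv l).map (ψ2 : _ → _) = 1 ∧
      (Tinv l).map (ψ2 : _ → _) * (T l).map (ψ2 : _ → _) = 1 := by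
    intro l
    constructor
    · rw [← Matrix.map_mul, (hTinv l).1, Matrix.map_one _ (map_zero ψ2) (map_one ψ2)]
    · rw [← Matrix.map_mul, (hTinv l).2, Matrix.map_one _ (map_zero ψ2) (map_one ψ2)]
  intro lam mu
  simp only [Matrix.transpose_transpose]
  -- the exchange relations
  have E1 := key_swap R hsymP hsymT (fun l => (T l).map (ψ2 : _ → _)) hT' lam mu
  rw [ht2 (T lam), ht2 (T mu)] at E1
  have hYBAinv : YBA (fun x => R (-x)) (fun l => (Tinv l).map (ψ2 : _ → _)) :=
    YBA_inv R ρ hρ huni _ _ hTinv' hT'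
  have E6 := key_swap (fun x => R (-x)) (fun x => hsymP (-x)) (fun x => hsymT (-x))
    (fun l => (Tinv l).map (ψ2 : _ → _)) hYBAinv (-lam) (-mu)
  rw [show (-(- -lam + -mu) : ℂ) = -lam + mu by ring] at E6
  rw [ht2 (Tinv (-lam)), ht2 (Tinv (-mu))] at E6
  have E2 := key_cross η R hsymP hsymT ρt hρt hcross
    (fun l => (T l).map (ψ2 : _ → _)) (fun l => (Tinv l).map (ψ2 : _ → _))
    hTinv' hT' (-lam) mu
  rw [ht2 (Tinv (-lam)), ht2 (T mu)] at E2
  have E3raw := key_cross η R hsymP hsymT ρt hρt hcross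
    (fun l => (T l).map (ψ2 : _ → _)) (fun l => (Tinv l).map (ψ2 : _ → _))
    hTinv' hT' (-mu) lam
  have E3 := congrArg pconj E3raw
  simp only [pconj_mul, pconj_emb1, pconj_emb2, pconj_liftR] at E3
  rw [hsymP] at E3
  rw [show (-mu - lam - 2 * η : ℂ) = -lam - mu - 2 * η by ring] at E3
  rw [ht2 (Tinv (-mu)), ht2 (T lam)] at E3
  have E5 := RightRefl_map ψ1 hψ1 η R 𝒯t h𝒯t lam mu
  rw [ht1 (𝒯t lam), ht1 (𝒯t mu)] at E5
  -- commutation of the two auxiliary-space factors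
  have kcomm : ∀ (X : Matrix (Fin mt) (Fin mt) ℂ) (Y : Matrix (Fin m) (Fin m) ℂ),
      (X ⊗ₖ (1 : Matrix (Fin m) (Fin m) ℂ)) * ((1 : Matrix (Fin mt) (Fin mt) ℂ) ⊗ₖ Y)
        = ((1 : Matrix (Fin mt) (Fin mt) ℂ) ⊗ₖ Y) * (X ⊗ₖ (1 : Matrix (Fin m) (Fin m) ℂ)) := by
    intro X Y
    rw [← Matrix.mul_kronecker_mul, ← Matrix.mul_kronecker_mul, one_mul, mul_one,
      one_mul, mul_one]
  have comm12 : ∀ (U : Matrix (Fin d) (Fin d) (Matrix (Fin mt) (Fin mt) ℂ))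
      (V : Matrix (Fin d) (Fin d) (Matrix (Fin m) (Fin m) ℂ)),
      emb1 (lift1 U) * emb2 (lift2 V) = emb2 (lift2 V) * emb1 (lift1 U) :=
    fun U V => emb1_emb2_comm _ _ (fun i j k l => kcomm (U i j) (V k l))
  have comm21 : ∀ (V : Matrix (Fin d) (Fin d) (Matrix (Fin m) (Fin m) ℂ))
      (U : Matrix (Fin d) (Fin d) (Matrix (Fin mt) (Fin mt) ℂ)),
      emb1 (lift2 V) * emb2 (lift1 U) = emb2 (lift1 U) * emb1 (lift2 V) :=
    fun V U => emb1_emb2_comm _ _ (fun i j k l => (kcomm (U k l) (V i j)).symm)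
  -- name the players
  simp only [emb1_mul, emb2_mul]
  set Rm : Matrix (Fin d × Fin d) (Fin d × Fin d) (Matrix (Fin mt × Fin m) (Fin mt × Fin m) ℂ) := liftR (R (-lam + mu)) with hRm
  set Rp : Matrix (Fin d × Fin d) (Fin d × Fin d) (Matrix (Fin mt × Fin m) (Fin mt × Fin m) ℂ) := liftR (R (-lam - mu - 2 * η)) with hRp
  set A1 := emb1 (lift2 (mt := mt) ((T lam)ᵀ)) with hA1
  set K1 := emb1 (lift1 (m := m) ((𝒯t lam)ᵀ)) with hK1
  set B1 := emb1 (lift2 (mt := mt) ((Tinv (-lam))ᵀ)) with hB1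
  set A2 := emb2 (lift2 (mt := mt) ((T mu)ᵀ)) with hA2
  set K2 := emb2 (lift1 (m := m) ((𝒯t mu)ᵀ)) with hK2
  set B2 := emb2 (lift2 (mt := mt) ((Tinv (-mu))ᵀ)) with hB2
  simp only [mul_assoc]
  rw [r3 E2 (K2 * B2)]
  rw [r2 (comm21 _ _) B2]
  rw [r2 (comm12 _ _) (Rp * (K2 * (B1 * B2)))]
  rw [r3 E1 (K1 * (Rp * (K2 * (B1 * B2))))]
  rw [r4 E5 (B1 * B2)]
  rw [r3' E6]
  rw [r2 (comm12 _ _) (B1 * Rm)]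
  rw [r2 (comm21 _ _) (Rp * (B2 * (K1 * (B1 * Rm))))]
  rw [r3 E3.symm (K1 * (B1 * Rm))]

end
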